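/- arXiv:1707.08272 — 8 statements merged into one kernel-verified Lean document; each statement's English description precedes it below -/
import Mathlib

section
/- Every bipartite graph G with n vertices has at most 2^{n/2} maximal bicliques; that is, |BC(G)|^2 ≤ 2^n. -/
/-- `(X, Y)` is a biclique of the bipartite graph with parts `L`, `R` and edge set `E`:
`X ⊆ L`, `Y ⊆ R`, and every vertex of `X` is joined to every vertex of `Y`. -/
def IsBiclique {V : Type*} (L R : Finset V) (E : Finset (V × V))
    (B : Finset V × Finset V) : Prop :=
  B.1 ⊆ L ∧ B.2 ⊆ R ∧ ∀ x ∈ B.1, ∀ y ∈ B.2, (x, y) ∈ E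

/-- `(X, Y)` is a maximal biclique: it is a biclique, and no other biclique contains it
componentwise. -/
def IsMaximalBiclique {V : Type*} (L R : Finset V) (E : Finset (V × V))
    (B : Finset V × Finset V) : Prop :=
  IsBiclique L R E B ∧
    ∀ B' : Finset V × Finset V, IsBiclique L R E B' → B.1 ⊆ B'.1 → B.2 ⊆ B'.2 → B' = B

/-- `BC L R E` is the set of maximal bicliques of the bipartite graph `(L, R, E)`. -/
def BC {V : Type*} (L R : Finset V) (E : Finset (V × V)) : Set (Finset V × Finset V) :=
  {B | IsMaximalBiclique L R E B}

/-- Every bipartite graph with `n` vertices has at most `2^(n/2)` maximal bicliques,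
i.e. `|BC(G)|² ≤ 2^n`. -/
theorem stmt0 {V : Type*} (L R : Finset V) (E : Finset (V × V))
    (hdisj : Disjoint L R) (hE : E ⊆ L ×ˢ R) :
    (BC L R E).ncard ^ 2 ≤ 2 ^ (L.card + R.card) := by
  classical
  -- The second component of a maximal biclique is determined by the first.
  have key1 : ∀ B ∈ BC L R E, B.2 = R.filter (fun y => ∀ x ∈ B.1, (x, y) ∈ E) := by
    rintro B ⟨⟨h1, h2, h3⟩, hmax⟩
    have hbc : IsBiclique L R E (B.1, R.filter (fun y => ∀ x ∈ B.1, (x, y) ∈ E)) :=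
      ⟨h1, Finset.filter_subset _ _, fun x hx y hy => (Finset.mem_filter.1 hy).2 x hx⟩
    have hsub : B.2 ⊆ R.filter (fun y => ∀ x ∈ B.1, (x, y) ∈ E) := fun y hy =>
      Finset.mem_filter.2 ⟨h2 hy, fun x hx => h3 x hx y hy⟩
    have := hmax _ hbc (le_refl _) hsub
    exact congrArg Prod.snd this.symm
  -- The first component of a maximal biclique is determined by the second.
  have key2 : ∀ B ∈ BC L R E, B.1 = L.filter (fun x => ∀ y ∈ B.2, (x, y) ∈ E) := by
    rintro B ⟨⟨h1, h2, h3⟩, hmax⟩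
    have hbc : IsBiclique L R E (L.filter (fun x => ∀ y ∈ B.2, (x, y) ∈ E), B.2) :=
      ⟨Finset.filter_subset _ _, h2, fun x hx y hy => (Finset.mem_filter.1 hx).2 y hy⟩
    have hsub : B.1 ⊆ L.filter (fun x => ∀ y ∈ B.2, (x, y) ∈ E) := fun x hx =>
      Finset.mem_filter.2 ⟨h1 hx, fun y hy => h3 x hx y hy⟩
    have := hmax _ hbc hsub (le_refl _)
    exact congrArg Prod.fst this.symm
  have hinj1 : Set.InjOn Prod.fst (BC L R E) := by
    intro B hB B' hB' h
    have h2 : B.2 = B'.2 := by rw [key1 B hB, key1 B' hB', h]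
    exact Prod.ext h h2
  have hinj2 : Set.InjOn Prod.snd (BC L R E) := by
    intro B hB B' hB' h
    have h1 : B.1 = B'.1 := by rw [key2 B hB, key2 B' hB', h]
    exact Prod.ext h1 h
  have hb1 : (BC L R E).ncard ≤ 2 ^ L.card := by
    have hsub : Prod.fst '' BC L R E ⊆ ↑L.powerset := by
      rintro X ⟨B, hB, rfl⟩
      exact Finset.mem_coe.2 (Finset.mem_powerset.2 hB.1.1)
    calc (BC L R E).ncard = (Prod.fst '' BC L R E).ncard :=
          (Set.ncard_image_of_injOn hinj1).symm
      _ ≤ (↑L.powerset : Set (Finset V)).ncard :=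
          Set.ncard_le_ncard hsub (Finset.finite_toSet _)
      _ = 2 ^ L.card := by rw [Set.ncard_coe_finset, Finset.card_powerset]
  have hb2 : (BC L R E).ncard ≤ 2 ^ R.card := by
    have hsub : Prod.snd '' BC L R E ⊆ ↑R.powerset := by
      rintro Y ⟨B, hB, rfl⟩
      exact Finset.mem_coe.2 (Finset.mem_powerset.2 hB.1.2.1)
    calc (BC L R E).ncard = (Prod.snd '' BC L R E).ncard :=
          (Set.ncard_image_of_injOn hinj2).symm
      _ ≤ (↑R.powerset : Set (Finset V)).ncard :=
          Set.ncard_le_ncard hsub (Finset.finite_toSet _)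
      _ = 2 ^ R.card := by rw [Set.ncard_coe_finset, Finset.card_powerset]
  calc (BC L R E).ncard ^ 2 = (BC L R E).ncard * (BC L R E).ncard := sq _
    _ ≤ 2 ^ L.card * 2 ^ R.card := Nat.mul_le_mul hb1 hb2
    _ = 2 ^ (L.card + R.card) := (pow_add 2 _ _).symm
end

section
/- For every integer k ≥ 1, the cocktail-party graph CP(k), a bipartite graph with 2k vertices, has exactly 2^k maximal bicliques. -/
/-- The left part of the cocktail-party graph `CP k`. -/
def cpL (k : ℕ) : Finset (Fin k ⊕ Fin k) :=
  (Finset.univ : Finset (Fin k)).image Sum.inl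

/-- The right part of the cocktail-party graph `CP k`. -/
def cpR (k : ℕ) : Finset (Fin k ⊕ Fin k) :=
  (Finset.univ : Finset (Fin k)).image Sum.inr

/-- The edge set of the cocktail-party graph `CP k`: `a_i` is joined to `b_p` iff `i ≠ p`. -/
def cpE (k : ℕ) : Finset ((Fin k ⊕ Fin k) × (Fin k ⊕ Fin k)) :=
  ((Finset.univ : Finset (Fin k × Fin k)).filter fun ij => ij.1 ≠ ij.2).image
    fun ij => (Sum.inl ij.1, Sum.inr ij.2)

def cpF (k : ℕ) (S : Finset (Fin k)) : Finset (Fin k ⊕ Fin k) × Finset (Fin k ⊕ Fin k) :=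
  (S.image Sum.inl, Sᶜ.image Sum.inr)

lemma mem_cpE {k : ℕ} {i p : Fin k} : (Sum.inl i, Sum.inr p) ∈ cpE k ↔ i ≠ p := by
  simp [cpE]

lemma cpF_biclique {k : ℕ} (S : Finset (Fin k)) :
    IsBiclique (cpL k) (cpR k) (cpE k) (cpF k S) := by
  refine ⟨?_, ?_, ?_⟩
  · intro x hx; simp only [cpF, Finset.mem_image] at hx
    obtain ⟨i, _, rfl⟩ := hx; simp [cpL]
  · intro y hy; simp only [cpF, Finset.mem_image] at hy
    obtain ⟨p, _, rfl⟩ := hy; simp [cpR]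
  · intro x hx y hy
    simp only [cpF, Finset.mem_image] at hx hy
    obtain ⟨i, hi, rfl⟩ := hx
    obtain ⟨p, hp, rfl⟩ := hy
    rw [Finset.mem_compl] at hp
    exact mem_cpE.mpr (fun h => hp (h ▸ hi))

lemma cpF_maximal {k : ℕ} (S : Finset (Fin k)) :
    IsMaximalBiclique (cpL k) (cpR k) (cpE k) (cpF k S) := by
  refine ⟨cpF_biclique S, ?_⟩
  rintro ⟨X, Y⟩ ⟨hXL, hYR, hE⟩ h1 h2
  have hX : X ⊆ S.image Sum.inl := by
    intro x hx
    have := hXL hx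
    simp only [cpL, Finset.mem_image, Finset.mem_univ, true_and] at this
    obtain ⟨i, rfl⟩ := this
    by_contra hc
    have hiS : i ∉ S := by simpa using hc
    have : Sum.inr i ∈ Y := h2 (by simp [cpF, Finset.mem_compl, hiS])
    exact (mem_cpE.mp (hE _ hx _ this)) rfl
  have hY : Y ⊆ Sᶜ.image Sum.inr := by
    intro y hy
    have := hYR hy
    simp only [cpR, Finset.mem_image, Finset.mem_univ, true_and] at this
    obtain ⟨p, rfl⟩ := this
    by_contra hc
    have hpS : p ∈ S := by simpa using hc
    have : Sum.inl p ∈ X := h1 (by simp [cpF, hpS])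
    exact (mem_cpE.mp (hE _ this _ hy)) rfl
  exact Prod.ext (Finset.Subset.antisymm hX h1) (Finset.Subset.antisymm hY h2)

lemma BC_eq (k : ℕ) :
    BC (cpL k) (cpR k) (cpE k) = ↑((Finset.univ : Finset (Finset (Fin k))).image (cpF k)) := by
  ext B
  simp only [Finset.coe_image, Finset.coe_univ, Set.image_univ, Set.mem_range]
  constructor
  · rintro ⟨⟨hXL, hYR, hE⟩, hmax⟩
    set S : Finset (Fin k) := Finset.univ.filter (fun i => Sum.inl i ∈ B.1) with hS
    refine ⟨S, ?_⟩
    refine hmax (cpF k S) (cpF_biclique S) ?_ ?_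
    · intro x hx
      have := hXL hx
      simp only [cpL, Finset.mem_image, Finset.mem_univ, true_and] at this
      obtain ⟨i, rfl⟩ := this
      simp [cpF, hS, hx]
    · intro y hy
      have := hYR hy
      simp only [cpR, Finset.mem_image, Finset.mem_univ, true_and] at this
      obtain ⟨p, rfl⟩ := this
      simp only [cpF, Finset.mem_image, Finset.mem_compl, hS, Finset.mem_filter,
        Finset.mem_univ, true_and]
      refine ⟨p, fun hp => ?_, rfl⟩
      exact (mem_cpE.mp (hE _ hp _ hy)) rfl
  · rintro ⟨S, rfl⟩
    exact cpF_maximal S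

/-- For every `k ≥ 1`, the cocktail-party graph `CP(k)` (a bipartite graph with `2k`
vertices) has exactly `2^k` maximal bicliques. -/
theorem stmt1 (k : ℕ) (hk : 1 ≤ k) :
    (BC (cpL k) (cpR k) (cpE k)).ncard = 2 ^ k := by
  rw [BC_eq, Set.ncard_coe_finset, Finset.card_image_of_injective _ ?_,
    Finset.card_univ, Fintype.card_finset, Fintype.card_fin]
  intro S T h
  have := congrArg Prod.fst h
  exact Finset.image_injective Sum.inl_injective (by simpa [cpF] using this)
end

section
/- Let G = (L, R, E) be a bipartite graph and H ⊆ (L × R) \ E a set of new edges. Then Υ^new(G, G+H) = ⋃_{e ∈ H} BC'(e), where for e = (u, v) ∈ H, BC'(e) denotes the set of maximal bicliques (X, Y) of G + H with u ∈ X and v ∈ Y. -/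
/-- `Υ^new(G, G+H) = ⋃_{e ∈ H} BC'(e)`: the new maximal bicliques arising from adding the
edge set `H` are exactly the maximal bicliques of `G + H` containing some edge of `H`. -/
theorem stmt2 {V : Type*} [DecidableEq V] (L R : Finset V) (E H : Finset (V × V))
    (hdisj : Disjoint L R) (hE : E ⊆ L ×ˢ R) (hH : H ⊆ (L ×ˢ R) \ E) :
    BC L R (E ∪ H) \ BC L R E =
      ⋃ e ∈ (H : Set (V × V)), {B ∈ BC L R (E ∪ H) | e.1 ∈ B.1 ∧ e.2 ∈ B.2} := by
  ext B
  simp only [BC, IsMaximalBiclique, Set.mem_diff, Set.mem_iUnion, Set.mem_setOf_eq,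
    Set.mem_sep_iff]
  constructor
  · rintro ⟨hB, hnB⟩
    by_contra hc
    push_neg at hc
    apply hnB
    obtain ⟨⟨h1, h2, h3⟩, hmax⟩ := hB
    have hbc : IsBiclique L R E B := by
      refine ⟨h1, h2, fun x hx y hy => ?_⟩
      rcases Finset.mem_union.mp (h3 x hx y hy) with h | h
      · exact h
      · exact absurd hy (hc (x, y) h ⟨⟨h1, h2, h3⟩, hmax⟩ hx)
    refine ⟨hbc, fun B' hB' ha hb => ?_⟩
    exact hmax B' ⟨hB'.1, hB'.2.1, fun x hx y hy =>
      Finset.mem_union_left _ (hB'.2.2 x hx y hy)⟩ ha hb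
  · rintro ⟨e, he, ⟨hB, he1, he2⟩⟩
    refine ⟨hB, fun hBE => ?_⟩
    have hmem : (e.1, e.2) ∈ E := hBE.1.2.2 e.1 he1 e.2 he2
    exact absurd hmem (Finset.mem_sdiff.mp (hH he)).2
end

section
/- Let G = (L, R, E) be a bipartite graph, H ⊆ (L × R) \ E, G' = G + H, and e = (u, v) ∈ H with u ∈ L, v ∈ R. Let G'_e be the induced bipartite subgraph of G' with left vertex set Γ_{G'}(v) (the neighbors of v in G', a subset of L), right vertex set Γ_{G'}(u) (the neighbors of u in G', a subset of R), and all edges of G' between these two sets. Then the set of maximal bicliques of G' containing both u and v is exactly equal to BC(G'_e), the set of all maximal bicliques of G'_e. -/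
/-- For an added edge `e = (u,v) ∈ H`, the maximal bicliques of `G' = G + H` containing both
`u` and `v` are exactly the maximal bicliques of the induced subgraph `G'_e` whose left part
is `Γ_{G'}(v)`, whose right part is `Γ_{G'}(u)`, and whose edges are all edges of `G'`
between these two sets. -/
theorem stmt3 {V : Type*} [DecidableEq V] (L R : Finset V) (E H : Finset (V × V))
    (hdisj : Disjoint L R) (hE : E ⊆ L ×ˢ R) (hH : H ⊆ (L ×ˢ R) \ E)
    (u v : V) (he : (u, v) ∈ H) :
    {B ∈ BC L R (E ∪ H) | u ∈ B.1 ∧ v ∈ B.2} =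
      BC (L.filter fun x => (x, v) ∈ E ∪ H)
         (R.filter fun y => (u, y) ∈ E ∪ H)
         ((E ∪ H).filter fun p =>
            p.1 ∈ L.filter (fun x => (x, v) ∈ E ∪ H) ∧
            p.2 ∈ R.filter (fun y => (u, y) ∈ E ∪ H)) := by
  have huv : (u, v) ∈ E ∪ H := Finset.mem_union_right _ he
  have huvLR := Finset.mem_product.1 (Finset.mem_sdiff.1 (hH he)).1
  set L' := L.filter fun x => (x, v) ∈ E ∪ H with hL'
  set R' := R.filter fun y => (u, y) ∈ E ∪ H with hR'
  set E2 := (E ∪ H).filter (fun p => p.1 ∈ L' ∧ p.2 ∈ R') with hE2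
  have huL' : u ∈ L' := Finset.mem_filter.2 ⟨huvLR.1, huv⟩
  have hvR' : v ∈ R' := Finset.mem_filter.2 ⟨huvLR.2, huv⟩
  ext B
  simp only [Set.mem_setOf_eq, BC, IsMaximalBiclique, IsBiclique, Set.mem_sep_iff]
  constructor
  · rintro ⟨⟨⟨h1, h2, h3⟩, hmax⟩, hu, hv⟩
    have hB1 : B.1 ⊆ L' := fun x hx => Finset.mem_filter.2 ⟨h1 hx, h3 x hx v hv⟩
    have hB2 : B.2 ⊆ R' := fun y hy => Finset.mem_filter.2 ⟨h2 hy, h3 u hu y hy⟩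
    refine ⟨⟨hB1, hB2, fun x hx y hy =>
      Finset.mem_filter.2 ⟨h3 x hx y hy, hB1 hx, hB2 hy⟩⟩, ?_⟩
    rintro B' ⟨g1, g2, g3⟩ hs1 hs2
    exact hmax B' ⟨g1.trans (Finset.filter_subset _ _), g2.trans (Finset.filter_subset _ _),
      fun x hx y hy => (Finset.mem_filter.1 (g3 x hx y hy)).1⟩ hs1 hs2
  · rintro ⟨⟨h1, h2, h3⟩, hmax⟩
    have hu : u ∈ B.1 := by
      have hbc : IsBiclique L' R' E2 (insert u B.1, B.2) := by
        refine ⟨Finset.insert_subset huL' h1, h2, ?_⟩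
        intro x hx y hy
        rcases Finset.mem_insert.1 hx with rfl | hx
        · exact Finset.mem_filter.2 ⟨(Finset.mem_filter.1 (h2 hy)).2, huL', h2 hy⟩
        · exact h3 x hx y hy
      have heq := hmax (insert u B.1, B.2) hbc (Finset.subset_insert _ _)
        (Finset.Subset.refl _)
      have : (insert u B.1, B.2).1 = B.1 := congrArg Prod.fst heq
      rw [← this]
      exact Finset.mem_insert_self _ _
    have hv : v ∈ B.2 := by
      have hbc : IsBiclique L' R' E2 (B.1, insert v B.2) := by
        refine ⟨h1, Finset.insert_subset hvR' h2, ?_⟩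
        intro x hx y hy
        rcases Finset.mem_insert.1 hy with rfl | hy
        · exact Finset.mem_filter.2 ⟨(Finset.mem_filter.1 (h1 hx)).2, h1 hx, hvR'⟩
        · exact h3 x hx y hy
      have heq := hmax (B.1, insert v B.2) hbc (Finset.Subset.refl _)
        (Finset.subset_insert _ _)
      have : (B.1, insert v B.2).2 = B.2 := congrArg Prod.snd heq
      rw [← this]
      exact Finset.mem_insert_self _ _
    refine ⟨⟨⟨h1.trans (Finset.filter_subset _ _), h2.trans (Finset.filter_subset _ _),
      fun x hx y hy => (Finset.mem_filter.1 (h3 x hx y hy)).1⟩, ?_⟩, hu, hv⟩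
    rintro B' ⟨g1, g2, g3⟩ hs1 hs2
    have hB'1 : B'.1 ⊆ L' := fun x hx =>
      Finset.mem_filter.2 ⟨g1 hx, g3 x hx v (hs2 hv)⟩
    have hB'2 : B'.2 ⊆ R' := fun y hy =>
      Finset.mem_filter.2 ⟨g2 hy, g3 u (hs1 hu) y hy⟩
    exact hmax B' ⟨hB'1, hB'2, fun x hx y hy =>
      Finset.mem_filter.2 ⟨g3 x hx y hy, hB'1 hx, hB'2 hy⟩⟩ hs1 hs2
end

section
/- Let G = (L, R, E) be a bipartite graph and e = (u, v) ∉ E with u ∈ L, v ∈ R. Then every biclique in BC(G+e) \ BC(G) (every new maximal biclique created by adding e) contains both u and v. -/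
/-- Every new maximal biclique created by adding a single edge `e = (u, v)` contains both
`u` and `v`. -/
theorem stmt4 {V : Type*} [DecidableEq V] (L R : Finset V) (E : Finset (V × V))
    (hdisj : Disjoint L R) (hE : E ⊆ L ×ˢ R)
    (u v : V) (hu : u ∈ L) (hv : v ∈ R) (he : (u, v) ∉ E) :
    ∀ B ∈ BC L R (E ∪ {(u, v)}) \ BC L R E, u ∈ B.1 ∧ v ∈ B.2 := by
  rintro B ⟨⟨⟨hB1, hB2, hBe⟩, hBmax⟩, hBnot⟩
  by_contra hcon
  have hnot : ¬ (u ∈ B.1 ∧ v ∈ B.2) := fun ⟨h1, h2⟩ => hcon ⟨h1, h2⟩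
  apply hBnot
  have hBG : IsBiclique L R E B := by
    refine ⟨hB1, hB2, fun x hx y hy => ?_⟩
    have := hBe x hx y hy
    rcases Finset.mem_union.mp this with h | h
    · exact h
    · exfalso
      simp only [Finset.mem_singleton, Prod.mk.injEq] at h
      exact hnot ⟨h.1 ▸ hx, h.2 ▸ hy⟩
  refine ⟨hBG, fun B' hB' h1 h2 => ?_⟩
  exact hBmax B' ⟨hB'.1, hB'.2.1, fun x hx y hy =>
    Finset.mem_union.mpr (Or.inl (hB'.2.2 x hx y hy))⟩ h1 h2
end

section
/- Let G = (L, R, E) be a bipartite graph and e = (u, v) ∉ E with u ∈ L, v ∈ R. Then every biclique (X, Y) in BC(G) \ BC(G+e) (every maximal biclique of G that is subsumed by adding e) contains u or contains v, i.e., u ∈ X or v ∈ Y. -/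
/-- Every maximal biclique of `G` subsumed by adding a single edge `e = (u, v)` contains
`u` or contains `v`. -/
theorem stmt5 {V : Type*} [DecidableEq V] (L R : Finset V) (E : Finset (V × V))
    (hdisj : Disjoint L R) (hE : E ⊆ L ×ˢ R)
    (u v : V) (hu : u ∈ L) (hv : v ∈ R) (he : (u, v) ∉ E) :
    ∀ B ∈ BC L R E \ BC L R (E ∪ {(u, v)}), u ∈ B.1 ∨ v ∈ B.2 := by
  rintro ⟨X, Y⟩ ⟨hmax, hnot⟩
  by_contra hcon
  push_neg at hcon
  obtain ⟨hux, hvy⟩ := hcon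
  obtain ⟨⟨hXL, hYR, hadj⟩, hmaxal⟩ := hmax
  -- (X, Y) is a biclique of G+e
  have hbic' : IsBiclique L R (E ∪ {(u, v)}) (X, Y) :=
    ⟨hXL, hYR, fun x hx y hy => Finset.mem_union_left _ (hadj x hx y hy)⟩
  apply hnot
  refine ⟨hbic', ?_⟩
  rintro ⟨X', Y'⟩ ⟨hXL', hYR', hadj'⟩ hXX' hYY'
  -- key: (X' \ {u}, Y' \ {v}) is a biclique of G containing (X, Y)
  have hkey : IsBiclique L R E (X' \ {u}, Y' \ {v}) := by
    refine ⟨(Finset.sdiff_subset).trans hXL', (Finset.sdiff_subset).trans hYR', ?_⟩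
    intro x hx y hy
    simp only [Finset.mem_sdiff, Finset.mem_singleton] at hx hy
    have := hadj' x hx.1 y hy.1
    rcases Finset.mem_union.mp this with h | h
    · exact h
    · simp only [Finset.mem_singleton, Prod.mk.injEq] at h
      exact absurd h.1 hx.2
  have hXsub : X ⊆ X' \ {u} := fun x hx =>
    Finset.mem_sdiff.mpr ⟨hXX' hx, by simp; rintro rfl; exact hux hx⟩
  have hYsub : Y ⊆ Y' \ {v} := fun y hy =>
    Finset.mem_sdiff.mpr ⟨hYY' hy, by simp; rintro rfl; exact hvy hy⟩
  have heq := hmaxal _ hkey hXsub hYsub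
  have heq1 : X' \ {u} = X := congrArg Prod.fst heq
  have heq2 : Y' \ {v} = Y := congrArg Prod.snd heq
  -- now show u ∉ X' and v ∉ Y'
  have hunot : u ∉ X' := by
    intro huX'
    -- (X ∪ {u}, Y) is a biclique of G
    have hb : IsBiclique L R E (insert u X, Y) := by
      refine ⟨Finset.insert_subset hu hXL, hYR, ?_⟩
      intro x hx y hy
      rcases Finset.mem_insert.mp hx with rfl | hx
      · have := hadj' x huX' y (hYY' hy)
        rcases Finset.mem_union.mp this with h | h
        · exact h
        · simp only [Finset.mem_singleton, Prod.mk.injEq] at h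
          exact absurd (h.2 ▸ hy) hvy
      · exact hadj x hx y hy
    have := hmaxal _ hb (Finset.subset_insert _ _) le_rfl
    have : insert u X = X := congrArg Prod.fst this
    exact hux (this ▸ Finset.mem_insert_self u X)
  have hvnot : v ∉ Y' := by
    intro hvY'
    have hb : IsBiclique L R E (X, insert v Y) := by
      refine ⟨hXL, Finset.insert_subset hv hYR, ?_⟩
      intro x hx y hy
      rcases Finset.mem_insert.mp hy with rfl | hy
      · have := hadj' x (hXX' hx) y hvY'
        rcases Finset.mem_union.mp this with h | h
        · exact h
        · simp only [Finset.mem_singleton, Prod.mk.injEq] at h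
          exact absurd (h.1 ▸ hx) hux
      · exact hadj x hx y hy
    have := hmaxal _ hb le_rfl (Finset.subset_insert _ _)
    have : insert v Y = Y := congrArg Prod.snd this
    exact hvy (this ▸ Finset.mem_insert_self v Y)
  have hX' : X' = X := by
    rw [← heq1, eq_comm, Finset.sdiff_eq_self_iff_disjoint, Finset.disjoint_singleton_right]
    exact hunot
  have hY' : Y' = Y := by
    rw [← heq2, eq_comm, Finset.sdiff_eq_self_iff_disjoint, Finset.disjoint_singleton_right]
    exact hvnot
  simp [hX', hY']
end

section
/- For any bipartite graph G with n ≥ 1 vertices and any vertex u of G, the number of maximal bicliques of G that contain u is at most g(n−1). -/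
/-- `g m` is the maximum number of maximal bicliques over all bipartite graphs with `m`
vertices. -/
noncomputable def g (m : ℕ) : ℕ :=
  sSup {k : ℕ | ∃ (W : Type) (L R : Finset W) (E : Finset (W × W)),
    Disjoint L R ∧ E ⊆ L ×ˢ R ∧ L.card + R.card = m ∧ (BC L R E).ncard = k}

set_option linter.unusedVariables false

lemma bc_subset {V : Type*} (L R : Finset V) (E : Finset (V × V)) :
    BC L R E ⊆ ((L.powerset ×ˢ R.powerset : Finset _) : Set _) := by
  rintro ⟨X, Y⟩ ⟨⟨h1, h2, -⟩, -⟩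
  simp only [Finset.coe_product, Set.mem_prod, Finset.mem_coe, Finset.mem_powerset]
  exact ⟨h1, h2⟩

lemma bc_finite {V : Type*} (L R : Finset V) (E : Finset (V × V)) :
    (BC L R E).Finite :=
  Set.Finite.subset (Finset.finite_toSet (L.powerset ×ˢ R.powerset)) (bc_subset L R E)

lemma bc_card_le {V : Type*} (L R : Finset V) (E : Finset (V × V)) :
    (BC L R E).ncard ≤ 2 ^ (L.card + R.card) := by
  calc (BC L R E).ncard ≤ ((L.powerset ×ˢ R.powerset : Finset _) : Set _).ncard :=
        Set.ncard_le_ncard (bc_subset L R E) (Finset.finite_toSet _)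
    _ = 2 ^ L.card * 2 ^ R.card := by
        rw [Set.ncard_coe_finset, Finset.card_product, Finset.card_powerset,
          Finset.card_powerset]
    _ = 2 ^ (L.card + R.card) := (pow_add 2 _ _).symm

lemma g_bdd (m : ℕ) : BddAbove {k : ℕ | ∃ (W : Type) (L R : Finset W) (E : Finset (W × W)),
    Disjoint L R ∧ E ⊆ L ×ˢ R ∧ L.card + R.card = m ∧ (BC L R E).ncard = k} := by
  refine ⟨2 ^ m, ?_⟩
  rintro k ⟨W, L, R, E, -, -, hcard, rfl⟩
  simpa [hcard] using bc_card_le L R E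

lemma bc_ncard_le_image {V W : Type*} [DecidableEq V] [DecidableEq W]
    (L R : Finset V) (E : Finset (V × V)) (hE : E ⊆ L ×ˢ R)
    (ψ : V → W) (hinj : Set.InjOn ψ ↑(L ∪ R)) :
    (BC L R E).ncard ≤
      (BC (L.image ψ) (R.image ψ) (E.image (Prod.map ψ ψ))).ncard := by
  have hLmem : ∀ x ∈ L, x ∈ (↑(L ∪ R) : Set V) := fun x hx => by simp [hx]
  have hRmem : ∀ x ∈ R, x ∈ (↑(L ∪ R) : Set V) := fun x hx => by simp [hx]
  have himg : ∀ s t : Finset V, s ⊆ L → t ⊆ L → s.image ψ = t.image ψ → s = t ∨ True := by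
    exact fun _ _ _ _ _ => Or.inr trivial
  -- injection
  apply Set.ncard_le_ncard_of_injOn (fun B => (B.1.image ψ, B.2.image ψ)) ?_ ?_ (bc_finite _ _ _)
  · -- maps into
    rintro ⟨X, Y⟩ ⟨⟨h1, h2, hadj⟩, hmax⟩
    constructor
    · refine ⟨Finset.image_subset_image h1, Finset.image_subset_image h2, ?_⟩
      simp only [Finset.mem_image]
      rintro x₀ ⟨x, hx, rfl⟩ y₀ ⟨y, hy, rfl⟩
      exact ⟨(x, y), hadj x hx y hy, rfl⟩
    · rintro ⟨X₀, Y₀⟩ ⟨hb1, hb2, hbadj⟩ hs1 hs2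
      -- pull back
      set X₁ : Finset V := L.filter (fun x => ψ x ∈ X₀) with hX₁
      set Y₁ : Finset V := R.filter (fun y => ψ y ∈ Y₀) with hY₁
      have hbc1 : IsBiclique L R E (X₁, Y₁) := by
        refine ⟨Finset.filter_subset _ _, Finset.filter_subset _ _, ?_⟩
        intro x hx y hy
        simp only [hX₁, hY₁, Finset.mem_filter] at hx hy
        have := hbadj (ψ x) hx.2 (ψ y) hy.2
        simp only [Finset.mem_image] at this
        obtain ⟨⟨a, b⟩, hab, heq⟩ := this
        have haL : a ∈ L := (Finset.mem_product.mp (hE hab)).1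
        have hbR : b ∈ R := (Finset.mem_product.mp (hE hab)).2
        simp only [Prod.map, Prod.mk.injEq] at heq
        have ha : a = x := hinj (hLmem a haL) (hLmem x hx.1) heq.1
        have hb : b = y := hinj (hRmem b hbR) (hRmem y hy.1) heq.2
        rwa [ha, hb] at hab
      have hXX : X ⊆ X₁ := by
        intro x hx
        simp only [hX₁, Finset.mem_filter]
        exact ⟨h1 hx, hs1 (Finset.mem_image_of_mem _ hx)⟩
      have hYY : Y ⊆ Y₁ := by
        intro y hy
        simp only [hY₁, Finset.mem_filter]
        exact ⟨h2 hy, hs2 (Finset.mem_image_of_mem _ hy)⟩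
      have heqB := hmax (X₁, Y₁) hbc1 hXX hYY
      have hX1 : X₁ = X := congrArg Prod.fst heqB
      have hY1 : Y₁ = Y := congrArg Prod.snd heqB
      -- now show (X₀, Y₀) = image
      have e1 : X₀ = X.image ψ := by
        apply Finset.Subset.antisymm
        · intro x₀ hx₀
          have : x₀ ∈ L.image ψ := hb1 hx₀
          simp only [Finset.mem_image] at this ⊢
          obtain ⟨x, hxL, rfl⟩ := this
          refine ⟨x, ?_, rfl⟩
          rw [← hX1]
          simp [hX₁, hxL, hx₀]
        · exact hs1
      have e2 : Y₀ = Y.image ψ := by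
        apply Finset.Subset.antisymm
        · intro y₀ hy₀
          have : y₀ ∈ R.image ψ := hb2 hy₀
          simp only [Finset.mem_image] at this ⊢
          obtain ⟨y, hyR, rfl⟩ := this
          refine ⟨y, ?_, rfl⟩
          rw [← hY1]
          simp [hY₁, hyR, hy₀]
        · exact hs2
      simp [e1, e2]
  · -- injective
    rintro ⟨X, Y⟩ hB ⟨X', Y'⟩ hB' heq
    simp only [Prod.mk.injEq] at heq ⊢
    obtain ⟨⟨hX1, hX2, -⟩, -⟩ := hB
    obtain ⟨⟨hX1', hX2', -⟩, -⟩ := hB'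
    constructor
    · apply Finset.Subset.antisymm <;> intro x hx
      · have : ψ x ∈ X'.image ψ := heq.1 ▸ Finset.mem_image_of_mem _ hx
        simp only [Finset.mem_image] at this
        obtain ⟨x', hx', he⟩ := this
        rwa [← hinj (hLmem x' (hX1' hx')) (hLmem x (hX1 hx)) he]
      · have : ψ x ∈ X.image ψ := heq.1 ▸ Finset.mem_image_of_mem _ hx
        simp only [Finset.mem_image] at this
        obtain ⟨x', hx', he⟩ := this
        rwa [← hinj (hLmem x' (hX1 hx')) (hLmem x (hX1' hx)) he]
    · apply Finset.Subset.antisymm <;> intro y hy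
      · have : ψ y ∈ Y'.image ψ := heq.2 ▸ Finset.mem_image_of_mem _ hy
        simp only [Finset.mem_image] at this
        obtain ⟨y', hy', he⟩ := this
        rwa [← hinj (hRmem y' (hX2' hy')) (hRmem y (hX2 hy)) he]
      · have : ψ y ∈ Y.image ψ := heq.2 ▸ Finset.mem_image_of_mem _ hy
        simp only [Finset.mem_image] at this
        obtain ⟨y', hy', he⟩ := this
        rwa [← hinj (hRmem y' (hX2 hy')) (hRmem y (hX2' hy)) he]

lemma le_g {V : Type*} (L R : Finset V) (E : Finset (V × V))
    (hdisj : Disjoint L R) (hE : E ⊆ L ×ˢ R) :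
    (BC L R E).ncard ≤ g (L.card + R.card) := by
  classical
  set S := L ∪ R with hS
  set ψ : V → ℕ := fun v => if h : v ∈ S then ((S.equivFin ⟨v, h⟩ : Fin S.card) : ℕ) else 0
    with hψ
  have hinj : Set.InjOn ψ ↑S := by
    intro a ha b hb h
    rw [Finset.mem_coe] at ha hb
    simp only [hψ, dif_pos ha, dif_pos hb] at h
    have h2 : S.equivFin ⟨a, ha⟩ = S.equivFin ⟨b, hb⟩ := Fin.val_injective h
    have h3 := S.equivFin.injective h2
    exact congrArg Subtype.val h3
  have hinjL : Set.InjOn ψ ↑L := hinj.mono (by simp [hS])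
  have hinjR : Set.InjOn ψ ↑R := hinj.mono (by simp [hS])
  refine (bc_ncard_le_image L R E hE ψ hinj).trans ?_
  apply le_csSup (g_bdd _)
  refine ⟨ℕ, L.image ψ, R.image ψ, E.image (Prod.map ψ ψ), ?_, ?_, ?_, rfl⟩
  · rw [Finset.disjoint_left]
    rintro a ha hb
    simp only [Finset.mem_image] at ha hb
    obtain ⟨x, hx, rfl⟩ := ha
    obtain ⟨y, hy, he⟩ := hb
    have : y = x := hinj (by simp [hS, hy]) (by simp [hS, hx]) he
    subst this
    exact Finset.disjoint_left.mp hdisj hx hy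
  · intro p hp
    simp only [Finset.mem_image] at hp
    obtain ⟨⟨a, b⟩, hab, rfl⟩ := hp
    have := Finset.mem_product.mp (hE hab)
    exact Finset.mem_product.mpr ⟨Finset.mem_image_of_mem _ this.1,
      Finset.mem_image_of_mem _ this.2⟩
  · rw [Finset.card_image_of_injOn hinjL, Finset.card_image_of_injOn hinjR]

lemma key {V : Type*} (L R : Finset V) (E : Finset (V × V))
    (hdisj : Disjoint L R) (hE : E ⊆ L ×ˢ R) (u : V) (hu : u ∈ L) :
    {B ∈ BC L R E | u ∈ B.1 ∨ u ∈ B.2}.ncard ≤ g (L.card + R.card - 1) := by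
  classical
  set N : Finset V := R.filter (fun y => (u, y) ∈ E) with hN
  set E' : Finset (V × V) := E.filter (fun p => p.1 ≠ u ∧ p.2 ∈ N) with hE'
  have hNR : N ⊆ R := Finset.filter_subset _ _
  have hE'sub : E' ⊆ (L.erase u) ×ˢ R := by
    intro p hp
    simp only [hE', Finset.mem_filter] at hp
    have := Finset.mem_product.mp (hE hp.1)
    exact Finset.mem_product.mpr ⟨Finset.mem_erase.mpr ⟨hp.2.1, this.1⟩, this.2⟩
  have hdisj' : Disjoint (L.erase u) R := hdisj.mono_left (Finset.erase_subset _ _)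
  -- for B in the set, u ∈ B.1
  have huB1 : ∀ B ∈ {B ∈ BC L R E | u ∈ B.1 ∨ u ∈ B.2}, u ∈ B.1 := by
    rintro B ⟨hB, hor⟩
    rcases hor with h | h
    · exact h
    · exact absurd (hB.1.2.1 h) (Finset.disjoint_left.mp hdisj hu)
  -- B.1 = {u} forces B.2 = N
  have hsingleton : ∀ B ∈ BC L R E, B.1 = {u} → B.2 = N := by
    rintro ⟨X, Y⟩ ⟨⟨h1, h2, hadj⟩, hmax⟩ hX
    have hYN : Y ⊆ N := by
      intro y hy
      simp only [hN, Finset.mem_filter]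
      exact ⟨h2 hy, hadj u (hX ▸ Finset.mem_singleton_self u) y hy⟩
    have hbN : IsBiclique L R E ({u}, N) := by
      refine ⟨Finset.singleton_subset_iff.mpr hu, hNR, ?_⟩
      intro x hx y hy
      rw [Finset.mem_singleton] at hx
      subst hx
      exact (Finset.mem_filter.mp hy).2
    have := hmax ({u}, N) hbN (hX ▸ Finset.Subset.refl _) hYN
    exact (congrArg Prod.snd this).symm
  have hmain : {B ∈ BC L R E | u ∈ B.1 ∨ u ∈ B.2}.ncard ≤ (BC (L.erase u) R E').ncard := by
    apply Set.ncard_le_ncard_of_injOn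
      (fun B => if B.1 = {u} then ((∅ : Finset V), R) else (B.1.erase u, B.2))
      ?_ ?_ (bc_finite _ _ _)
    · -- maps into BC G'
      rintro B hBmem
      have hu1 : u ∈ B.1 := huB1 B hBmem
      obtain ⟨hB, -⟩ := hBmem
      obtain ⟨⟨h1, h2, hadj⟩, hmax⟩ := hB
      by_cases hc : B.1 = {u}
      · simp only [hc, if_pos]
        have hB2 : B.2 = N := hsingleton B ⟨⟨h1, h2, hadj⟩, hmax⟩ hc
        constructor
        · exact ⟨Finset.empty_subset _, Finset.Subset.refl _, by simp⟩
        · rintro ⟨X', Y'⟩ ⟨hb1, hb2, hbadj⟩ hs1 hs2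
          have hY' : Y' = R := Finset.Subset.antisymm hb2 hs2
          have hX' : X' = ∅ := by
            rw [Finset.eq_empty_iff_forall_notMem]
            intro x hx
            have hxL : x ∈ L.erase u := hb1 hx
            -- ({u, x}, N) is a G-biclique containing B
            have hbux : IsBiclique L R E ({u, x}, N) := by
              refine ⟨?_, hNR, ?_⟩
              · intro z hz
                rcases Finset.mem_insert.mp hz with rfl | hz
                · exact hu
                · rw [Finset.mem_singleton] at hz
                  exact hz ▸ Finset.mem_of_mem_erase hxL
              · intro z hz y hy
                rcases Finset.mem_insert.mp hz with rfl | hz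
                · exact (Finset.mem_filter.mp hy).2
                · rw [Finset.mem_singleton] at hz
                  subst hz
                  have : (z, y) ∈ E' := hbadj z hx y (hY' ▸ hNR hy)
                  exact Finset.mem_filter.mp this |>.1
            have := hmax ({u, x}, N) hbux
              (by rw [hc]; exact Finset.singleton_subset_iff.mpr (Finset.mem_insert_self _ _))
              (hB2 ▸ Finset.Subset.refl _)
            have hfst : ({u, x} : Finset V) = B.1 := congrArg Prod.fst this
            rw [hc] at hfst
            have : x ∈ ({u} : Finset V) := hfst ▸ Finset.mem_insert_of_mem
              (Finset.mem_singleton_self x)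
            rw [Finset.mem_singleton] at this
            exact (Finset.mem_erase.mp hxL).1 this
          rw [hX', hY']
      · simp only [hc, if_neg, if_false]
        constructor
        · refine ⟨Finset.erase_subset_erase u h1, h2, ?_⟩
          intro x hx y hy
          have hxe := Finset.mem_erase.mp hx
          refine Finset.mem_filter.mpr ⟨hadj x hxe.2 y hy, hxe.1, ?_⟩
          simp only [hN, Finset.mem_filter]
          exact ⟨h2 hy, hadj u hu1 y hy⟩
        · rintro ⟨X', Y'⟩ ⟨hb1, hb2, hbadj⟩ hs1 hs2
          -- B.1.erase u is nonempty
          have hne : (B.1.erase u).Nonempty := by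
            rcases Finset.eq_empty_or_nonempty (B.1.erase u) with he | hne
            · exfalso
              apply hc
              apply Finset.Subset.antisymm
              · intro x hx
                rw [Finset.mem_singleton]
                by_contra hxu
                exact Finset.eq_empty_iff_forall_notMem.mp he x
                  (Finset.mem_erase.mpr ⟨hxu, hx⟩)
              · exact Finset.singleton_subset_iff.mpr hu1
            · exact hne
          obtain ⟨x₀, hx₀⟩ := hne
          have hx₀' : x₀ ∈ X' := hs1 hx₀
          have hY'N : ∀ y ∈ Y', y ∈ N := by
            intro y hy
            exact (Finset.mem_filter.mp (hbadj x₀ hx₀' y hy)).2.2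
          have hbig : IsBiclique L R E (insert u X', Y') := by
            refine ⟨?_, hb2, ?_⟩
            · intro z hz
              rcases Finset.mem_insert.mp hz with rfl | hz
              · exact hu
              · exact Finset.mem_of_mem_erase (hb1 hz)
            · intro z hz y hy
              rcases Finset.mem_insert.mp hz with rfl | hz
              · exact (Finset.mem_filter.mp (hY'N y hy)).2
              · exact (Finset.mem_filter.mp (hbadj z hz y hy)).1
          have hcont1 : B.1 ⊆ insert u X' := by
            intro x hx
            by_cases hxu : x = u
            · exact hxu ▸ Finset.mem_insert_self _ _
            · exact Finset.mem_insert_of_mem (hs1 (Finset.mem_erase.mpr ⟨hxu, hx⟩))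
          have heqB := hmax (insert u X', Y') hbig hcont1 hs2
          have hfst : insert u X' = B.1 := congrArg Prod.fst heqB
          have hsnd : Y' = B.2 := congrArg Prod.snd heqB
          have huX' : u ∉ X' := fun h => (Finset.mem_erase.mp (hb1 h)).1 rfl
          have : X' = B.1.erase u := by
            rw [← hfst, Finset.erase_insert huX']
          rw [this, hsnd]
    · -- injective
      rintro B hB B' hB' heq
      have hu1 : u ∈ B.1 := huB1 B hB
      have hu1' : u ∈ B'.1 := huB1 B' hB'
      have herase_ne : ∀ C : Finset V × Finset V, u ∈ C.1 → C.1 ≠ {u} →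
          (C.1.erase u).Nonempty := by
        intro C huC hC
        rcases Finset.eq_empty_or_nonempty (C.1.erase u) with he | hne
        · exfalso
          apply hC
          apply Finset.Subset.antisymm
          · intro x hx
            rw [Finset.mem_singleton]
            by_contra hxu
            exact Finset.eq_empty_iff_forall_notMem.mp he x
              (Finset.mem_erase.mpr ⟨hxu, hx⟩)
          · exact Finset.singleton_subset_iff.mpr huC
        · exact hne
      by_cases hc : B.1 = {u} <;> by_cases hc' : B'.1 = {u}
      · have h2 : B.2 = N := hsingleton B hB.1 hc
        have h2' : B'.2 = N := hsingleton B' hB'.1 hc'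
        exact Prod.ext (hc.trans hc'.symm) (h2.trans h2'.symm)
      · exfalso
        simp only [hc, hc', if_pos, if_neg, if_false] at heq
        have := congrArg Prod.fst heq
        simp only at this
        obtain ⟨x, hx⟩ := herase_ne B' hu1' hc'
        rw [← this] at hx
        exact Finset.notMem_empty x hx
      · exfalso
        simp only [hc, hc', if_pos, if_neg, if_false] at heq
        have := congrArg Prod.fst heq
        simp only at this
        obtain ⟨x, hx⟩ := herase_ne B hu1 hc
        rw [this] at hx
        exact Finset.notMem_empty x hx
      · simp only [hc, hc', if_neg, if_false] at heq
        rw [Prod.mk.injEq] at heq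
        obtain ⟨h1, h2⟩ := heq
        have : B.1 = B'.1 := by
          rw [← Finset.insert_erase hu1, ← Finset.insert_erase hu1', h1]
        exact Prod.ext this h2
  refine hmain.trans ?_
  have := le_g (L.erase u) R E' hdisj' hE'sub
  rwa [Finset.card_erase_of_mem hu,
    show L.card - 1 + R.card = L.card + R.card - 1 by
      have : 1 ≤ L.card := Finset.card_pos.mpr ⟨u, hu⟩
      omega] at this

lemma bc_swap {V : Type*} [DecidableEq V] (L R : Finset V) (E : Finset (V × V))
    (B : Finset V × Finset V) (h : IsMaximalBiclique L R E B) :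
    IsMaximalBiclique R L (E.image Prod.swap) B.swap := by
  obtain ⟨⟨h1, h2, hadj⟩, hmax⟩ := h
  constructor
  · refine ⟨h2, h1, ?_⟩
    intro y hy x hx
    exact Finset.mem_image_of_mem Prod.swap (hadj x hx y hy)
  · rintro ⟨X', Y'⟩ ⟨hb1, hb2, hbadj⟩ hs1 hs2
    have hb : IsBiclique L R E (Y', X') := by
      refine ⟨hb2, hb1, ?_⟩
      intro x hx y hy
      have := hbadj y hy x hx
      simp only [Finset.mem_image] at this
      obtain ⟨⟨a, b⟩, hab, heq⟩ := this
      simp only [Prod.swap_prod_mk, Prod.mk.injEq] at heq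
      rwa [← heq.2, ← heq.1]
    have := hmax (Y', X') hb hs2 hs1
    rw [← this]
    rfl

/-- For a bipartite graph `G` on `n ≥ 1` vertices and any vertex `u` of `G`, the number of
maximal bicliques of `G` containing `u` is at most `g(n-1)`. -/
theorem stmt6 {V : Type*} (L R : Finset V) (E : Finset (V × V))
    (hdisj : Disjoint L R) (hE : E ⊆ L ×ˢ R) (hn : 1 ≤ L.card + R.card)
    (u : V) (hu : u ∈ L ∨ u ∈ R) :
    {B ∈ BC L R E | u ∈ B.1 ∨ u ∈ B.2}.ncard ≤ g (L.card + R.card - 1) := by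
  classical
  rcases hu with huL | huR
  · exact key L R E hdisj hE u huL
  · set E' := E.image Prod.swap with hE'
    have hE'sub : E' ⊆ R ×ˢ L := by
      intro p hp
      simp only [hE', Finset.mem_image] at hp
      obtain ⟨⟨a, b⟩, hab, rfl⟩ := hp
      have := Finset.mem_product.mp (hE hab)
      exact Finset.mem_product.mpr ⟨this.2, this.1⟩
    have hstep : {B ∈ BC L R E | u ∈ B.1 ∨ u ∈ B.2}.ncard ≤
        {B ∈ BC R L E' | u ∈ B.1 ∨ u ∈ B.2}.ncard := by
      apply Set.ncard_le_ncard_of_injOn Prod.swap ?_ ?_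
        (Set.Finite.subset (bc_finite R L E') (Set.sep_subset _ _))
      · rintro B ⟨hB, hor⟩
        exact ⟨bc_swap L R E B hB, hor.symm⟩
      · exact Prod.swap_injective.injOn
    refine hstep.trans ?_
    have := key R L E' hdisj.symm hE'sub u huR
    rwa [Nat.add_comm R.card L.card] at this
end

section
/- For every even integer n > 2 there exists a bipartite graph G = (L, R, E) on n vertices and an edge e = (u, v) ∉ E such that |Υ(G, G+e)| = 3·2^{(n−2)/2} (which equals 3·g(n−2)). -/
namespace Stmt11

variable (k : ℕ)

/-- The left crown vertices. -/
def av (i : Fin k) : Fin (2 * k + 2) := ⟨i.val, by have := i.isLt; omega⟩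
/-- The right crown vertices. -/
def bv (i : Fin k) : Fin (2 * k + 2) := ⟨k + i.val, by have := i.isLt; omega⟩
/-- The extra left vertex. -/
def uv : Fin (2 * k + 2) := ⟨2 * k, by omega⟩
/-- The extra right vertex. -/
def vv : Fin (2 * k + 2) := ⟨2 * k + 1, by omega⟩

variable {k}

lemma av_inj : Function.Injective (av k) := by
  intro i j h
  have := congrArg Fin.val h
  simpa [av, Fin.ext_iff] using this

lemma bv_inj : Function.Injective (bv k) := by
  intro i j h
  have := congrArg Fin.val h
  simp only [bv] at this
  exact Fin.ext (by omega)

lemma av_ne_bv (i j : Fin k) : av k i ≠ bv k j := by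
  have := i.isLt
  simp [av, bv, Fin.ext_iff]; omega

lemma av_ne_uv (i : Fin k) : av k i ≠ uv k := by
  have := i.isLt
  simp [av, uv, Fin.ext_iff]; omega

lemma av_ne_vv (i : Fin k) : av k i ≠ vv k := by
  have := i.isLt
  simp [av, vv, Fin.ext_iff]; omega

lemma bv_ne_uv (i : Fin k) : bv k i ≠ uv k := by
  have := i.isLt
  simp [bv, uv, Fin.ext_iff]; omega

lemma bv_ne_vv (i : Fin k) : bv k i ≠ vv k := by
  have := i.isLt
  simp [bv, vv, Fin.ext_iff]; omega

lemma uv_ne_vv : uv k ≠ vv k := by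
  simp [uv, vv, Fin.ext_iff]

variable (k)

/-- The left part. -/
def Lp : Finset (Fin (2 * k + 2)) := insert (uv k) (Finset.univ.image (av k))
/-- The right part. -/
def Rp : Finset (Fin (2 * k + 2)) := insert (vv k) (Finset.univ.image (bv k))

/-- The edge set: all pairs in `Lp × Rp` except `(uv, vv)` and the matching `(av i, bv i)`. -/
def Ep : Finset (Fin (2 * k + 2) × Fin (2 * k + 2)) :=
  (Lp k ×ˢ Rp k).filter
    (fun p => ¬(p.1 = uv k ∧ p.2 = vv k) ∧ ∀ i : Fin k, ¬(p.1 = av k i ∧ p.2 = bv k i))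

/-- The augmented edge set. -/
def Ep' : Finset (Fin (2 * k + 2) × Fin (2 * k + 2)) := Ep k ∪ {(uv k, vv k)}

variable {k}

lemma mem_Lp {x : Fin (2 * k + 2)} : x ∈ Lp k ↔ x = uv k ∨ ∃ i, x = av k i := by
  simp [Lp, eq_comm]

lemma mem_Rp {y : Fin (2 * k + 2)} : y ∈ Rp k ↔ y = vv k ∨ ∃ i, y = bv k i := by
  simp [Rp, eq_comm]

lemma uv_mem_Lp : uv k ∈ Lp k := Finset.mem_insert_self _ _
lemma av_mem_Lp (i : Fin k) : av k i ∈ Lp k := mem_Lp.2 (Or.inr ⟨i, rfl⟩)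
lemma vv_mem_Rp : vv k ∈ Rp k := Finset.mem_insert_self _ _
lemma bv_mem_Rp (i : Fin k) : bv k i ∈ Rp k := mem_Rp.2 (Or.inr ⟨i, rfl⟩)

lemma mem_Ep {x y : Fin (2 * k + 2)} :
    (x, y) ∈ Ep k ↔ x ∈ Lp k ∧ y ∈ Rp k ∧ ¬(x = uv k ∧ y = vv k) ∧
      ∀ i : Fin k, ¬(x = av k i ∧ y = bv k i) := by
  simp [Ep, Finset.mem_filter, Finset.mem_product, and_assoc]

lemma mem_Ep' {x y : Fin (2 * k + 2)} :
    (x, y) ∈ Ep' k ↔ (x, y) ∈ Ep k ∨ (x = uv k ∧ y = vv k) := by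
  simp [Ep', Prod.ext_iff]
  exact Or.comm

lemma edge_ub (j : Fin k) : (uv k, bv k j) ∈ Ep k := by
  refine mem_Ep.2 ⟨uv_mem_Lp, bv_mem_Rp j, ?_, ?_⟩
  · rintro ⟨-, h⟩; exact (bv_ne_vv j) h
  · rintro i ⟨h, -⟩; exact (av_ne_uv i) h.symm

lemma edge_av (i : Fin k) : (av k i, vv k) ∈ Ep k := by
  refine mem_Ep.2 ⟨av_mem_Lp i, vv_mem_Rp, ?_, ?_⟩
  · rintro ⟨h, -⟩; exact (av_ne_uv i) h
  · rintro j ⟨-, h⟩; exact (bv_ne_vv j) h.symm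

lemma edge_ab {i j : Fin k} (hij : i ≠ j) : (av k i, bv k j) ∈ Ep k := by
  refine mem_Ep.2 ⟨av_mem_Lp i, bv_mem_Rp j, ?_, ?_⟩
  · rintro ⟨h, -⟩; exact (av_ne_uv i) h
  · rintro l ⟨h1, h2⟩
    exact hij ((av_inj h1).trans (bv_inj h2).symm)

lemma not_edge_uv : (uv k, vv k) ∉ Ep k := by
  intro h
  exact (mem_Ep.1 h).2.2.1 ⟨rfl, rfl⟩

lemma not_edge_ab (i : Fin k) : (av k i, bv k i) ∉ Ep k := by
  intro h
  exact (mem_Ep.1 h).2.2.2 i ⟨rfl, rfl⟩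

lemma not_edge_ab' (i : Fin k) : (av k i, bv k i) ∉ Ep' k := by
  intro h
  rcases mem_Ep'.1 h with h | ⟨h, -⟩
  · exact not_edge_ab i h
  · exact av_ne_uv i h

lemma edge_uv' : (uv k, vv k) ∈ Ep' k := mem_Ep'.2 (Or.inr ⟨rfl, rfl⟩)

variable (k)

/-- First family of maximal bicliques of `G` (those containing `uv`). -/
def P1 (S : Finset (Fin k)) : Finset (Fin (2 * k + 2)) × Finset (Fin (2 * k + 2)) :=
  (insert (uv k) (S.image (av k)), Sᶜ.image (bv k))

/-- Second family of maximal bicliques of `G` (those containing `vv`). -/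
def P2 (S : Finset (Fin k)) : Finset (Fin (2 * k + 2)) × Finset (Fin (2 * k + 2)) :=
  (S.image (av k), insert (vv k) (Sᶜ.image (bv k)))

/-- The maximal bicliques of `G + (uv, vv)`. -/
def P3 (S : Finset (Fin k)) : Finset (Fin (2 * k + 2)) × Finset (Fin (2 * k + 2)) :=
  (insert (uv k) (S.image (av k)), insert (vv k) (Sᶜ.image (bv k)))

variable {k}

lemma uv_not_mem_image (S : Finset (Fin k)) : uv k ∉ S.image (av k) := by
  simp only [Finset.mem_image, not_exists]
  rintro i ⟨-, h⟩
  exact av_ne_uv i h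

lemma vv_not_mem_image (S : Finset (Fin k)) : vv k ∉ S.image (bv k) := by
  simp only [Finset.mem_image, not_exists]
  rintro i ⟨-, h⟩
  exact bv_ne_vv i h

/-- Every maximal biclique of `G` is of the form `P1 S` or `P2 S`. -/
lemma bc_E_subset (B : Finset (Fin (2 * k + 2)) × Finset (Fin (2 * k + 2)))
    (hB : IsMaximalBiclique (Lp k) (Rp k) (Ep k) B) :
    (∃ S, B = P1 k S) ∨ (∃ S, B = P2 k S) := by
  obtain ⟨⟨hXL, hYR, hE⟩, hmax⟩ := hB
  obtain ⟨X, Y⟩ := B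
  simp only at hXL hYR hE ⊢
  set S : Finset (Fin k) := Finset.univ.filter (fun i => av k i ∈ X) with hS
  have hSmem : ∀ i, i ∈ S ↔ av k i ∈ X := by
    intro i; simp [hS]
  by_cases hu : uv k ∈ X
  · -- u ∈ X : B = P1 S
    left
    refine ⟨S, ?_⟩
    have hv : vv k ∉ Y := fun hv => not_edge_uv (hE _ hu _ hv)
    have hX : X = insert (uv k) (S.image (av k)) := by
      apply Finset.Subset.antisymm
      · intro x hx
        rcases mem_Lp.1 (hXL hx) with h | ⟨i, h⟩
        · subst h; exact Finset.mem_insert_self _ _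
        · subst h
          exact Finset.mem_insert_of_mem (Finset.mem_image_of_mem _ ((hSmem i).2 hx))
      · intro x hx
        rcases Finset.mem_insert.1 hx with h | h
        · subst h; exact hu
        · obtain ⟨i, hi, rfl⟩ := Finset.mem_image.1 h
          exact (hSmem i).1 hi
    have hY : Y = Sᶜ.image (bv k) := by
      apply Finset.Subset.antisymm
      · intro y hy
        rcases mem_Rp.1 (hYR hy) with h | ⟨j, h⟩
        · exact absurd (h ▸ hy) hv
        · subst h
          refine Finset.mem_image_of_mem _ (Finset.mem_compl.2 fun hj => ?_)
          exact not_edge_ab j (hE _ ((hSmem j).1 hj) _ hy)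
      · intro y hy
        obtain ⟨j, hj, rfl⟩ := Finset.mem_image.1 hy
        have hj' : j ∉ S := Finset.mem_compl.1 hj
        -- use maximality to show bv j ∈ Y
        have hbic : IsBiclique (Lp k) (Rp k) (Ep k) (X, insert (bv k j) Y) := by
          refine ⟨hXL, Finset.insert_subset (bv_mem_Rp j) hYR, ?_⟩
          intro x hx y' hy'
          rcases Finset.mem_insert.1 hy' with h | h
          · subst h
            rcases Finset.mem_insert.1 (hX ▸ hx) with h | h
            · subst h; exact edge_ub j
            · obtain ⟨i, hi, rfl⟩ := Finset.mem_image.1 h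
              exact edge_ab (fun hij => hj' (hij ▸ hi))
          · exact hE _ hx _ h
        have := hmax _ hbic (le_refl _) (Finset.subset_insert _ _)
        have : insert (bv k j) Y = Y := congrArg Prod.snd this
        rw [← this]; exact Finset.mem_insert_self _ _
    rw [P1, hX, hY]
  · -- u ∉ X : B = P2 S
    right
    refine ⟨S, ?_⟩
    have hv : vv k ∈ Y := by
      have hbic : IsBiclique (Lp k) (Rp k) (Ep k) (X, insert (vv k) Y) := by
        refine ⟨hXL, Finset.insert_subset vv_mem_Rp hYR, ?_⟩
        intro x hx y' hy'
        rcases Finset.mem_insert.1 hy' with h | h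
        · subst h
          rcases mem_Lp.1 (hXL hx) with h | ⟨i, h⟩
          · exact absurd (h ▸ hx) hu
          · subst h; exact edge_av i
        · exact hE _ hx _ h
      have := hmax _ hbic (le_refl _) (Finset.subset_insert _ _)
      have : insert (vv k) Y = Y := congrArg Prod.snd this
      rw [← this]; exact Finset.mem_insert_self _ _
    have hX : X = S.image (av k) := by
      apply Finset.Subset.antisymm
      · intro x hx
        rcases mem_Lp.1 (hXL hx) with h | ⟨i, h⟩
        · exact absurd (h ▸ hx) hu
        · subst h
          exact Finset.mem_image_of_mem _ ((hSmem i).2 hx)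
      · intro x hx
        obtain ⟨i, hi, rfl⟩ := Finset.mem_image.1 hx
        exact (hSmem i).1 hi
    have hY : Y = insert (vv k) (Sᶜ.image (bv k)) := by
      apply Finset.Subset.antisymm
      · intro y hy
        rcases mem_Rp.1 (hYR hy) with h | ⟨j, h⟩
        · subst h; exact Finset.mem_insert_self _ _
        · subst h
          refine Finset.mem_insert_of_mem
            (Finset.mem_image_of_mem _ (Finset.mem_compl.2 fun hj => ?_))
          exact not_edge_ab j (hE _ ((hSmem j).1 hj) _ hy)
      · intro y hy
        rcases Finset.mem_insert.1 hy with h | h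
        · subst h; exact hv
        · obtain ⟨j, hj, rfl⟩ := Finset.mem_image.1 h
          have hj' : j ∉ S := Finset.mem_compl.1 hj
          have hbic : IsBiclique (Lp k) (Rp k) (Ep k) (X, insert (bv k j) Y) := by
            refine ⟨hXL, Finset.insert_subset (bv_mem_Rp j) hYR, ?_⟩
            intro x hx y' hy'
            rcases Finset.mem_insert.1 hy' with h | h
            · subst h
              obtain ⟨i, hi, rfl⟩ := Finset.mem_image.1 (hX ▸ hx)
              exact edge_ab (fun hij => hj' (hij ▸ hi))
            · exact hE _ hx _ h
          have := hmax _ hbic (le_refl _) (Finset.subset_insert _ _)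
          have : insert (bv k j) Y = Y := congrArg Prod.snd this
          rw [← this]; exact Finset.mem_insert_self _ _
    rw [P2, hX, hY]

/-- `P1 S` is a maximal biclique of `G`. -/
lemma P1_maximal (S : Finset (Fin k)) : IsMaximalBiclique (Lp k) (Rp k) (Ep k) (P1 k S) := by
  constructor
  · refine ⟨?_, ?_, ?_⟩
    · intro x hx
      rcases Finset.mem_insert.1 hx with h | h
      · subst h; exact uv_mem_Lp
      · obtain ⟨i, -, rfl⟩ := Finset.mem_image.1 h; exact av_mem_Lp i
    · intro y hy
      obtain ⟨j, -, rfl⟩ := Finset.mem_image.1 hy; exact bv_mem_Rp j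
    · intro x hx y hy
      obtain ⟨j, hj, rfl⟩ := Finset.mem_image.1 hy
      rcases Finset.mem_insert.1 hx with h | h
      · subst h; exact edge_ub j
      · obtain ⟨i, hi, rfl⟩ := Finset.mem_image.1 h
        exact edge_ab (fun hij => (Finset.mem_compl.1 hj) (hij ▸ hi))
  · rintro ⟨X', Y'⟩ ⟨hXL, hYR, hE⟩ hX hY
    simp only [P1] at hX hY ⊢
    have hu : uv k ∈ X' := hX (Finset.mem_insert_self _ _)
    have hX' : X' = insert (uv k) (S.image (av k)) := by
      refine Finset.Subset.antisymm (fun x hx => ?_) hX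
      rcases mem_Lp.1 (hXL hx) with h | ⟨i, h⟩
      · subst h; exact Finset.mem_insert_self _ _
      · subst h
        refine Finset.mem_insert_of_mem (Finset.mem_image_of_mem _ ?_)
        by_contra hi
        exact not_edge_ab i
          (hE _ hx _ (hY (Finset.mem_image_of_mem _ (Finset.mem_compl.2 hi))))
    have hY' : Y' = Sᶜ.image (bv k) := by
      refine Finset.Subset.antisymm (fun y hy => ?_) hY
      rcases mem_Rp.1 (hYR hy) with h | ⟨j, h⟩
      · subst h; exact absurd (hE _ hu _ hy) not_edge_uv
      · subst h
        refine Finset.mem_image_of_mem _ (Finset.mem_compl.2 fun hj => ?_)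
        exact not_edge_ab j
          (hE _ (hX (Finset.mem_insert_of_mem (Finset.mem_image_of_mem _ hj))) _ hy)
    rw [hX', hY']

/-- `P2 S` is a maximal biclique of `G`. -/
lemma P2_maximal (S : Finset (Fin k)) : IsMaximalBiclique (Lp k) (Rp k) (Ep k) (P2 k S) := by
  constructor
  · refine ⟨?_, ?_, ?_⟩
    · intro x hx
      obtain ⟨i, -, rfl⟩ := Finset.mem_image.1 hx; exact av_mem_Lp i
    · intro y hy
      rcases Finset.mem_insert.1 hy with h | h
      · subst h; exact vv_mem_Rp
      · obtain ⟨j, -, rfl⟩ := Finset.mem_image.1 h; exact bv_mem_Rp j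
    · intro x hx y hy
      obtain ⟨i, hi, rfl⟩ := Finset.mem_image.1 hx
      rcases Finset.mem_insert.1 hy with h | h
      · subst h; exact edge_av i
      · obtain ⟨j, hj, rfl⟩ := Finset.mem_image.1 h
        exact edge_ab (fun hij => (Finset.mem_compl.1 hj) (hij ▸ hi))
  · rintro ⟨X', Y'⟩ ⟨hXL, hYR, hE⟩ hX hY
    simp only [P2] at hX hY ⊢
    have hv : vv k ∈ Y' := hY (Finset.mem_insert_self _ _)
    have hX' : X' = S.image (av k) := by
      refine Finset.Subset.antisymm (fun x hx => ?_) hX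
      rcases mem_Lp.1 (hXL hx) with h | ⟨i, h⟩
      · subst h; exact absurd (hE _ hx _ hv) not_edge_uv
      · subst h
        refine Finset.mem_image_of_mem _ ?_
        by_contra hi
        exact not_edge_ab i
          (hE _ hx _ (hY (Finset.mem_insert_of_mem
            (Finset.mem_image_of_mem _ (Finset.mem_compl.2 hi)))))
    have hY' : Y' = insert (vv k) (Sᶜ.image (bv k)) := by
      refine Finset.Subset.antisymm (fun y hy => ?_) hY
      rcases mem_Rp.1 (hYR hy) with h | ⟨j, h⟩
      · subst h; exact Finset.mem_insert_self _ _
      · subst h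
        refine Finset.mem_insert_of_mem
          (Finset.mem_image_of_mem _ (Finset.mem_compl.2 fun hj => ?_))
        exact not_edge_ab j (hE _ (hX (Finset.mem_image_of_mem _ hj)) _ hy)
    rw [hX', hY']

/-- The maximal bicliques of `G` are exactly the `P1 S` and `P2 S`. -/
lemma bc_E_eq : BC (Lp k) (Rp k) (Ep k) = Set.range (P1 k) ∪ Set.range (P2 k) := by
  ext B
  constructor
  · intro hB
    rcases bc_E_subset B hB with ⟨S, rfl⟩ | ⟨S, rfl⟩
    · exact Or.inl ⟨S, rfl⟩
    · exact Or.inr ⟨S, rfl⟩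
  · rintro (⟨S, rfl⟩ | ⟨S, rfl⟩)
    · exact P1_maximal S
    · exact P2_maximal S

/-- Every maximal biclique of `G + (uv, vv)` is of form `P3 S`. -/
lemma bc_E'_subset (B : Finset (Fin (2 * k + 2)) × Finset (Fin (2 * k + 2)))
    (hB : IsMaximalBiclique (Lp k) (Rp k) (Ep' k) B) : ∃ S, B = P3 k S := by
  obtain ⟨⟨hXL, hYR, hE⟩, hmax⟩ := hB
  obtain ⟨X, Y⟩ := B
  simp only at hXL hYR hE ⊢
  set S : Finset (Fin k) := Finset.univ.filter (fun i => av k i ∈ X) with hS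
  have hSmem : ∀ i, i ∈ S ↔ av k i ∈ X := by
    intro i; simp [hS]
  have edge_u : ∀ y ∈ Rp k, (uv k, y) ∈ Ep' k := by
    intro y hy
    rcases mem_Rp.1 hy with h | ⟨j, h⟩
    · subst h; exact edge_uv'
    · subst h; exact mem_Ep'.2 (Or.inl (edge_ub j))
  have edge_v : ∀ x ∈ Lp k, (x, vv k) ∈ Ep' k := by
    intro x hx
    rcases mem_Lp.1 hx with h | ⟨i, h⟩
    · subst h; exact edge_uv'
    · subst h; exact mem_Ep'.2 (Or.inl (edge_av i))
  have hu : uv k ∈ X := by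
    have hbic : IsBiclique (Lp k) (Rp k) (Ep' k) (insert (uv k) X, Y) := by
      refine ⟨Finset.insert_subset uv_mem_Lp hXL, hYR, ?_⟩
      intro x hx y hy
      rcases Finset.mem_insert.1 hx with h | h
      · subst h; exact edge_u _ (hYR hy)
      · exact hE _ h _ hy
    have := hmax _ hbic (Finset.subset_insert _ _) (le_refl _)
    have : insert (uv k) X = X := congrArg Prod.fst this
    rw [← this]; exact Finset.mem_insert_self _ _
  have hv : vv k ∈ Y := by
    have hbic : IsBiclique (Lp k) (Rp k) (Ep' k) (X, insert (vv k) Y) := by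
      refine ⟨hXL, Finset.insert_subset vv_mem_Rp hYR, ?_⟩
      intro x hx y hy
      rcases Finset.mem_insert.1 hy with h | h
      · subst h; exact edge_v _ (hXL hx)
      · exact hE _ hx _ h
    have := hmax _ hbic (le_refl _) (Finset.subset_insert _ _)
    have : insert (vv k) Y = Y := congrArg Prod.snd this
    rw [← this]; exact Finset.mem_insert_self _ _
  refine ⟨S, ?_⟩
  have hX : X = insert (uv k) (S.image (av k)) := by
    apply Finset.Subset.antisymm
    · intro x hx
      rcases mem_Lp.1 (hXL hx) with h | ⟨i, h⟩
      · subst h; exact Finset.mem_insert_self _ _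
      · subst h
        exact Finset.mem_insert_of_mem (Finset.mem_image_of_mem _ ((hSmem i).2 hx))
    · intro x hx
      rcases Finset.mem_insert.1 hx with h | h
      · subst h; exact hu
      · obtain ⟨i, hi, rfl⟩ := Finset.mem_image.1 h
        exact (hSmem i).1 hi
  have hY : Y = insert (vv k) (Sᶜ.image (bv k)) := by
    apply Finset.Subset.antisymm
    · intro y hy
      rcases mem_Rp.1 (hYR hy) with h | ⟨j, h⟩
      · subst h; exact Finset.mem_insert_self _ _
      · subst h
        refine Finset.mem_insert_of_mem
          (Finset.mem_image_of_mem _ (Finset.mem_compl.2 fun hj => ?_))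
        exact not_edge_ab' j (hE _ ((hSmem j).1 hj) _ hy)
    · intro y hy
      rcases Finset.mem_insert.1 hy with h | h
      · subst h; exact hv
      · obtain ⟨j, hj, rfl⟩ := Finset.mem_image.1 h
        have hj' : j ∉ S := Finset.mem_compl.1 hj
        have hbic : IsBiclique (Lp k) (Rp k) (Ep' k) (X, insert (bv k j) Y) := by
          refine ⟨hXL, Finset.insert_subset (bv_mem_Rp j) hYR, ?_⟩
          intro x hx y' hy'
          rcases Finset.mem_insert.1 hy' with h | h
          · subst h
            rcases Finset.mem_insert.1 (hX ▸ hx) with h | h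
            · subst h; exact mem_Ep'.2 (Or.inl (edge_ub j))
            · obtain ⟨i, hi, rfl⟩ := Finset.mem_image.1 h
              exact mem_Ep'.2 (Or.inl (edge_ab (fun hij => hj' (hij ▸ hi))))
          · exact hE _ hx _ h
        have := hmax _ hbic (le_refl _) (Finset.subset_insert _ _)
        have : insert (bv k j) Y = Y := congrArg Prod.snd this
        rw [← this]; exact Finset.mem_insert_self _ _
  rw [P3, hX, hY]

/-- `P3 S` is a maximal biclique of `G + (uv, vv)`. -/
lemma P3_maximal (S : Finset (Fin k)) :
    IsMaximalBiclique (Lp k) (Rp k) (Ep' k) (P3 k S) := by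
  constructor
  · refine ⟨?_, ?_, ?_⟩
    · intro x hx
      rcases Finset.mem_insert.1 hx with h | h
      · subst h; exact uv_mem_Lp
      · obtain ⟨i, -, rfl⟩ := Finset.mem_image.1 h; exact av_mem_Lp i
    · intro y hy
      rcases Finset.mem_insert.1 hy with h | h
      · subst h; exact vv_mem_Rp
      · obtain ⟨j, -, rfl⟩ := Finset.mem_image.1 h; exact bv_mem_Rp j
    · intro x hx y hy
      rcases Finset.mem_insert.1 hx with hx' | hx'
      · subst hx'
        rcases Finset.mem_insert.1 hy with h | h
        · subst h; exact edge_uv'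
        · obtain ⟨j, -, rfl⟩ := Finset.mem_image.1 h
          exact mem_Ep'.2 (Or.inl (edge_ub j))
      · obtain ⟨i, hi, rfl⟩ := Finset.mem_image.1 hx'
        rcases Finset.mem_insert.1 hy with h | h
        · subst h; exact mem_Ep'.2 (Or.inl (edge_av i))
        · obtain ⟨j, hj, rfl⟩ := Finset.mem_image.1 h
          exact mem_Ep'.2
            (Or.inl (edge_ab (fun hij => (Finset.mem_compl.1 hj) (hij ▸ hi))))
  · rintro ⟨X', Y'⟩ ⟨hXL, hYR, hE⟩ hX hY
    simp only [P3] at hX hY ⊢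
    have hu : uv k ∈ X' := hX (Finset.mem_insert_self _ _)
    have hv : vv k ∈ Y' := hY (Finset.mem_insert_self _ _)
    have hX' : X' = insert (uv k) (S.image (av k)) := by
      refine Finset.Subset.antisymm (fun x hx => ?_) hX
      rcases mem_Lp.1 (hXL hx) with h | ⟨i, h⟩
      · subst h; exact Finset.mem_insert_self _ _
      · subst h
        refine Finset.mem_insert_of_mem (Finset.mem_image_of_mem _ ?_)
        by_contra hi
        exact not_edge_ab' i
          (hE _ hx _ (hY (Finset.mem_insert_of_mem
            (Finset.mem_image_of_mem _ (Finset.mem_compl.2 hi)))))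
    have hY' : Y' = insert (vv k) (Sᶜ.image (bv k)) := by
      refine Finset.Subset.antisymm (fun y hy => ?_) hY
      rcases mem_Rp.1 (hYR hy) with h | ⟨j, h⟩
      · subst h; exact Finset.mem_insert_self _ _
      · subst h
        refine Finset.mem_insert_of_mem
          (Finset.mem_image_of_mem _ (Finset.mem_compl.2 fun hj => ?_))
        exact not_edge_ab' j
          (hE _ (hX (Finset.mem_insert_of_mem (Finset.mem_image_of_mem _ hj))) _ hy)
    rw [hX', hY']

lemma bc_E'_eq : BC (Lp k) (Rp k) (Ep' k) = Set.range (P3 k) := by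
  ext B
  constructor
  · intro hB
    obtain ⟨S, rfl⟩ := bc_E'_subset B hB
    exact ⟨S, rfl⟩
  · rintro ⟨S, rfl⟩
    exact P3_maximal S

lemma P1_inj : Function.Injective (P1 k) := by
  intro S S' h
  have h1 : insert (uv k) (S.image (av k)) = insert (uv k) (S'.image (av k)) :=
    congrArg Prod.fst h
  have h2 : S.image (av k) = S'.image (av k) := by
    have := congrArg (fun t => Finset.erase t (uv k)) h1
    simpa [Finset.erase_insert (uv_not_mem_image S),
      Finset.erase_insert (uv_not_mem_image S')] using this
  exact Finset.image_injective av_inj h2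

lemma P2_inj : Function.Injective (P2 k) := by
  intro S S' h
  exact Finset.image_injective av_inj (congrArg Prod.fst h)

lemma P3_inj : Function.Injective (P3 k) := by
  intro S S' h
  have h1 : insert (uv k) (S.image (av k)) = insert (uv k) (S'.image (av k)) :=
    congrArg Prod.fst h
  have h2 : S.image (av k) = S'.image (av k) := by
    have := congrArg (fun t => Finset.erase t (uv k)) h1
    simpa [Finset.erase_insert (uv_not_mem_image S),
      Finset.erase_insert (uv_not_mem_image S')] using this
  exact Finset.image_injective av_inj h2

lemma uv_mem_P1_fst (S : Finset (Fin k)) : uv k ∈ (P1 k S).1 := Finset.mem_insert_self _ _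
lemma uv_not_mem_P2_fst (S : Finset (Fin k)) : uv k ∉ (P2 k S).1 := uv_not_mem_image S
lemma vv_not_mem_P1_snd (S : Finset (Fin k)) : vv k ∉ (P1 k S).2 := vv_not_mem_image Sᶜ
lemma vv_mem_P2_snd (S : Finset (Fin k)) : vv k ∈ (P2 k S).2 := Finset.mem_insert_self _ _
lemma uv_mem_P3_fst (S : Finset (Fin k)) : uv k ∈ (P3 k S).1 := Finset.mem_insert_self _ _
lemma vv_mem_P3_snd (S : Finset (Fin k)) : vv k ∈ (P3 k S).2 := Finset.mem_insert_self _ _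

lemma P1_ne_P2 (S S' : Finset (Fin k)) : P1 k S ≠ P2 k S' := by
  intro h
  exact uv_not_mem_P2_fst S' (h ▸ uv_mem_P1_fst S)

lemma P3_ne_P1 (S S' : Finset (Fin k)) : P3 k S ≠ P1 k S' := by
  intro h
  exact vv_not_mem_P1_snd S' (h ▸ vv_mem_P3_snd S)

lemma P3_ne_P2 (S S' : Finset (Fin k)) : P3 k S ≠ P2 k S' := by
  intro h
  exact uv_not_mem_P2_fst S' (h ▸ uv_mem_P3_fst S)

end Stmt11

open Stmt11 in
/-- For every even `n > 2` there is a bipartite graph `G` on `n` vertices and a non-edge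
`e = (u, v)` whose addition changes the set of maximal bicliques by exactly
`3·2^((n-2)/2)` (which equals `3·g(n-2)`). -/
theorem stmt11 (n : ℕ) (hn : 2 < n) (heven : Even n) :
    ∃ (L R : Finset (Fin n)) (E : Finset (Fin n × Fin n)) (u v : Fin n),
      Disjoint L R ∧ E ⊆ L ×ˢ R ∧ L.card + R.card = n ∧
      u ∈ L ∧ v ∈ R ∧ (u, v) ∉ E ∧
      ((BC L R (E ∪ {(u, v)}) \ BC L R E) ∪
        (BC L R E \ BC L R (E ∪ {(u, v)}))).ncard = 3 * 2 ^ ((n - 2) / 2) := by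
  obtain ⟨m, hm⟩ := heven
  obtain ⟨k, hk⟩ : ∃ k, n = 2 * k + 2 := ⟨m - 1, by omega⟩
  subst hk
  refine ⟨Lp k, Rp k, Ep k, uv k, vv k, ?_, ?_, ?_, uv_mem_Lp, vv_mem_Rp, not_edge_uv, ?_⟩
  · -- Disjoint
    rw [Finset.disjoint_left]
    intro x hx hx'
    rcases mem_Lp.1 hx with h | ⟨i, h⟩ <;> rcases mem_Rp.1 hx' with h' | ⟨j, h'⟩
    · exact uv_ne_vv (h.symm.trans h')
    · exact bv_ne_uv j (h'.symm.trans h)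
    · exact av_ne_vv i (h.symm.trans h')
    · exact av_ne_bv i j (h.symm.trans h')
  · -- E ⊆ L ×ˢ R
    intro p hp
    exact Finset.mem_of_mem_filter _ hp
  · -- cards
    have hL : (Lp k).card = k + 1 := by
      rw [Lp, Finset.card_insert_of_notMem (by simpa using uv_not_mem_image Finset.univ),
        Finset.card_image_of_injective _ av_inj, Finset.card_univ, Fintype.card_fin]
    have hR : (Rp k).card = k + 1 := by
      rw [Rp, Finset.card_insert_of_notMem (by simpa using vv_not_mem_image Finset.univ),
        Finset.card_image_of_injective _ bv_inj, Finset.card_univ, Fintype.card_fin]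
    rw [hL, hR]; ring
  · -- the count
    have hEp' : Ep k ∪ {(uv k, vv k)} = Ep' k := rfl
    rw [hEp', bc_E_eq, bc_E'_eq]
    have h1 : Set.range (P3 k) \ (Set.range (P1 k) ∪ Set.range (P2 k)) = Set.range (P3 k) := by
      ext B
      simp only [Set.mem_diff, Set.mem_union, Set.mem_range, not_or, not_exists,
        and_iff_left_iff_imp]
      rintro ⟨S, rfl⟩
      exact ⟨fun S' h => P3_ne_P1 S S' h.symm, fun S' h => P3_ne_P2 S S' h.symm⟩
    have h2 : (Set.range (P1 k) ∪ Set.range (P2 k)) \ Set.range (P3 k) =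
        Set.range (P1 k) ∪ Set.range (P2 k) := by
      ext B
      simp only [Set.mem_diff, Set.mem_union, Set.mem_range, not_exists,
        and_iff_left_iff_imp]
      rintro (⟨S, rfl⟩ | ⟨S, rfl⟩) S' hS'
      · exact P3_ne_P1 S' S hS'
      · exact P3_ne_P2 S' S hS'
    rw [h1, h2]
    -- express as a finset
    have hfin : Set.range (P3 k) ∪ (Set.range (P1 k) ∪ Set.range (P2 k)) =
        ↑((Finset.univ.image (P3 k)) ∪ ((Finset.univ.image (P1 k)) ∪ (Finset.univ.image (P2 k)))) := by
      simp [Finset.coe_union, Finset.coe_image, Set.image_univ]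
    rw [hfin, Set.ncard_coe_finset]
    have hd12 : Disjoint (Finset.univ.image (P1 k)) (Finset.univ.image (P2 k)) := by
      rw [Finset.disjoint_left]
      intro B hB hB'
      obtain ⟨S, -, rfl⟩ := Finset.mem_image.1 hB
      obtain ⟨S', -, h⟩ := Finset.mem_image.1 hB'
      exact P1_ne_P2 S S' h.symm
    have hd3 : Disjoint (Finset.univ.image (P3 k))
        ((Finset.univ.image (P1 k)) ∪ (Finset.univ.image (P2 k))) := by
      rw [Finset.disjoint_left]
      intro B hB hB'
      obtain ⟨S, -, rfl⟩ := Finset.mem_image.1 hB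
      rcases Finset.mem_union.1 hB' with h | h
      · obtain ⟨S', -, h⟩ := Finset.mem_image.1 h
        exact P3_ne_P1 S S' h.symm
      · obtain ⟨S', -, h⟩ := Finset.mem_image.1 h
        exact P3_ne_P2 S S' h.symm
    rw [Finset.card_union_of_disjoint hd3, Finset.card_union_of_disjoint hd12,
      Finset.card_image_of_injective _ P3_inj, Finset.card_image_of_injective _ P1_inj,
      Finset.card_image_of_injective _ P2_inj, Finset.card_univ, Fintype.card_finset,
      Fintype.card_fin]
    have : (2 * k + 2 - 2) / 2 = k := by omega
    rw [this]; ring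
end
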